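/- Let H be an N×N real symmetric tridiagonal matrix commuting with the reversal (mirror) permutation matrix S (S e_n = e_{N+1-n}), with all off-diagonal entries J_n nonzero. Suppose every eigenvalue λ of H with symmetric eigenvector (S v = v) satisfies e^{-i t_0 λ} = e^{iφ}, and every eigenvalue with antisymmetric eigenvector (S v = -v) satisfies e^{-i t_0 λ} = -e^{iφ}, for some fixed t_0 and φ. Then exp(-i t_0 H) e_1 = e^{iφ} e_N, i.e., perfect state transfer occurs. -/

import Mathlib

/-!
An eigenvector of a tridiagonal matrix with nonzero off-diagonal entries is determined by its
first entry, so every eigenspace of `H` is a line. Since the mirror `S` is an involution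
commuting with `H`, it acts on each eigenline by `±1`, and the hypotheses say exactly that
`exp (-i t₀ H)` and `e^{iφ} S` agree on every eigenvector. Hence `exp (-i t₀ H) = e^{iφ} S`,
and `S e₁ = e_N`.
-/

open Matrix

/-- Real symmetric tridiagonal complex matrix: diagonal `B`, off-diagonal `J`. -/
noncomputable def triC (N : ℕ) (B J : ℕ → ℝ) : Matrix (Fin N) (Fin N) ℂ :=
  Matrix.of fun i j =>
    if (i : ℕ) = j then (B i : ℂ)
    else if (i : ℕ) + 1 = j then (J i : ℂ)
    else if (j : ℕ) + 1 = i then (J j : ℂ)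
    else 0

/-- The mirror (order-reversing) permutation matrix `S eₙ = e_{N+1-n}`. -/
def mirrorC (N : ℕ) : Matrix (Fin N) (Fin N) ℂ :=
  Matrix.of fun i j => if j = i.rev then 1 else 0

open scoped Norms.Operator in
theorem Matrix.exp_mulVec_of_mulVec_eq_smul {n 𝕜 : Type*} [Fintype n] [DecidableEq n] [RCLike 𝕜]
    {M : Matrix n n 𝕜} {μ : 𝕜} {v : n → 𝕜} (hv : M *ᵥ v = μ • v) :
    NormedSpace.exp M *ᵥ v = NormedSpace.exp μ • v := by
  -- every column of `vecMulVec v 1` is `v`, so it intertwines the scalar matrix `μ` with `M`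
  have hM : SemiconjBy (vecMulVec v 1) (scalar n μ) M := by
    rw [SemiconjBy, mul_vecMulVec, hv, scalar_apply]
    ext
    simp [mul_comm]
  have hexp := SemiconjBy.exp_right (𝔸 := Matrix n n 𝕜) hM
  rw [← NormedSpace.map_exp (scalar n) (continuous_algebraMap 𝕜 _)] at hexp
  ext i
  have hcol := congrFun (congrFun hexp.eq i) i
  rw [mul_vecMulVec, scalar_apply, mul_diagonal, vecMulVec_apply, vecMulVec_apply,
    Pi.one_apply, mul_one, mul_one] at hcol
  rw [Pi.smul_apply, smul_eq_mul, mul_comm]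
  exact hcol.symm

namespace Matrix.IsHermitian

variable {𝕜 n : Type*} [RCLike 𝕜] [Fintype n] [DecidableEq n] {A : Matrix n n 𝕜}

theorem mulVec_eigenvectorBasis_eq_coe_smul (hA : A.IsHermitian) (j : n) :
    A *ᵥ ⇑(hA.eigenvectorBasis j) = (hA.eigenvalues j : 𝕜) • ⇑(hA.eigenvectorBasis j) := by
  rw [hA.mulVec_eigenvectorBasis j, RCLike.real_smul_eq_coe_smul (K := 𝕜)]

theorem ext_of_mulVec_eigenvectorBasis (hA : A.IsHermitian) {M M' : Matrix n n 𝕜}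
    (h : ∀ j, M *ᵥ ⇑(hA.eigenvectorBasis j) = M' *ᵥ ⇑(hA.eigenvectorBasis j)) : M = M' :=
  toLin'.injective <| (hA.eigenvectorBasis.toBasis.map (WithLp.linearEquiv 2 𝕜 (n → 𝕜))).ext
    fun j => by simpa using h j

end Matrix.IsHermitian

section Hessenberg

variable {K : Type*} [Field K] {N : ℕ} {M : Matrix (Fin N) (Fin N) K}
  (hzero : ∀ i j : Fin N, (i : ℕ) + 1 < j → M i j = 0)
  (hsuper : ∀ i j : Fin N, (i : ℕ) + 1 = j → M i j ≠ 0)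
include hzero hsuper

-- Row `m` of the eigenvalue equation solves for the entry `m + 1` of an eigenvector.
theorem eq_zero_of_mulVec_eq_smul_of_apply_zero {μ : K} {v : Fin N → K} (hv : M *ᵥ v = μ • v)
    (hN : 0 < N) (h0 : v ⟨0, hN⟩ = 0) : v = 0 := by
  suffices h : ∀ m, ∀ i : Fin N, (i : ℕ) ≤ m → v i = 0 from funext fun i => h i i le_rfl
  intro m
  induction m with
  | zero => intro i hi; rwa [show i = ⟨0, hN⟩ from Fin.ext (Nat.le_zero.mp hi)]
  | succ m ih =>
    intro i hi
    rcases Nat.lt_or_eq_of_le hi with hlt | heq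
    · exact ih i (by omega)
    let k : Fin N := ⟨m, by omega⟩
    have hrow : M k i * v i = 0 := by
      have hk := congrFun hv k
      rw [Pi.smul_apply, ih k le_rfl, smul_zero, mulVec, dotProduct,
        Fintype.sum_eq_single i] at hk
      · exact hk
      intro j hj
      rcases le_or_gt (j : ℕ) m with hjm | hjm
      · rw [ih j hjm, mul_zero]
      · rw [hzero k j (by have := Fin.val_injective.ne hj; simp only [k]; omega), zero_mul]
    exact (mul_eq_zero.mp hrow).resolve_left (hsuper k i (by simp only [k]; omega))

theorem exists_eq_smul_of_mulVec_eq_smul {μ : K} {v w : Fin N → K} (hv0 : v ≠ 0)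
    (hv : M *ᵥ v = μ • v) (hw : M *ᵥ w = μ • w) : ∃ c : K, w = c • v := by
  have hN : 0 < N := Nat.pos_of_ne_zero fun hN => hv0 (funext fun i => (hN ▸ i).elim0)
  have hv₀ : v ⟨0, hN⟩ ≠ 0 := fun h =>
    hv0 (eq_zero_of_mulVec_eq_smul_of_apply_zero hzero hsuper hv hN h)
  refine ⟨w ⟨0, hN⟩ / v ⟨0, hN⟩, sub_eq_zero.mp ?_⟩
  refine eq_zero_of_mulVec_eq_smul_of_apply_zero hzero hsuper (μ := μ) ?_ hN ?_
  · rw [mulVec_sub, mulVec_smul, hv, hw, smul_sub, smul_comm]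
  · simp [hv₀]

end Hessenberg

theorem mulVec_eq_self_or_eq_neg_of_commute {K n : Type*} [Field K] [Fintype n] [DecidableEq n]
    {M S : Matrix n n K}
    (hsimple : ∀ (μ : K) (v w : n → K), v ≠ 0 → M *ᵥ v = μ • v → M *ᵥ w = μ • w →
      ∃ c : K, w = c • v)
    (hS : S * S = 1) (hcomm : S * M = M * S) {μ : K} {v : n → K} (hv0 : v ≠ 0)
    (hv : M *ᵥ v = μ • v) : S *ᵥ v = v ∨ S *ᵥ v = -v := by
  have hSv : M *ᵥ (S *ᵥ v) = μ • (S *ᵥ v) := by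
    rw [mulVec_mulVec, ← hcomm, ← mulVec_mulVec, hv, mulVec_smul]
  obtain ⟨c, hc⟩ := hsimple μ v (S *ᵥ v) hv0 hv hSv
  have hc2 : c * c = 1 := by
    have : (c * c) • v = (1 : K) • v := by
      rw [one_smul, mul_smul, ← hc, ← mulVec_smul, ← hc, mulVec_mulVec, hS, one_mulVec]
    exact smul_left_injective K hv0 this
  rcases mul_self_eq_one_iff.mp hc2 with rfl | rfl
  · exact .inl (by rw [hc, one_smul])
  · exact .inr (by rw [hc, neg_one_smul])

theorem isHermitian_triC (N : ℕ) (B J : ℕ → ℝ) : (triC N B J).IsHermitian := by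
  ext i j
  simp only [conjTranspose_apply, triC, of_apply]
  split_ifs <;> first | omega | simp_all

theorem triC_apply_of_succ_eq {N : ℕ} (B J : ℕ → ℝ) {i j : Fin N} (h : (i : ℕ) + 1 = j) :
    triC N B J i j = J i := by
  simp only [triC, of_apply]
  split_ifs <;> first | rfl | omega

theorem triC_apply_of_succ_lt {N : ℕ} (B J : ℕ → ℝ) {i j : Fin N} (h : (i : ℕ) + 1 < j) :
    triC N B J i j = 0 := by
  simp only [triC, of_apply]
  split_ifs <;> first | rfl | omega

theorem exists_eq_smul_of_triC_mulVec_eq_smul {N : ℕ} {B J : ℕ → ℝ}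
    (hJ : ∀ i, i + 1 < N → J i ≠ 0) {μ : ℂ} {v w : Fin N → ℂ} (hv0 : v ≠ 0)
    (hv : triC N B J *ᵥ v = μ • v) (hw : triC N B J *ᵥ w = μ • w) : ∃ c : ℂ, w = c • v :=
  exists_eq_smul_of_mulVec_eq_smul (fun _ _ h => triC_apply_of_succ_lt B J h)
    (fun i j h => by rw [triC_apply_of_succ_eq B J h]; exact_mod_cast hJ i (h ▸ j.isLt))
    hv0 hv hw

theorem mirrorC_mul_self (N : ℕ) : mirrorC N * mirrorC N = 1 := by
  ext i j
  simp only [mirrorC, mul_apply, of_apply, one_apply, mul_ite, mul_one, mul_zero]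
  rw [Fintype.sum_eq_single j.rev (fun k hk => by rw [if_neg]; rintro rfl; simp at hk)]
  simp [Fin.rev_eq_iff, eq_comm]

theorem mirrorC_mulVec_single {N : ℕ} (i : Fin N) :
    mirrorC N *ᵥ Pi.single i 1 = Pi.single i.rev 1 := by
  ext j
  simp only [mirrorC, mulVec, dotProduct, of_apply, Pi.single_apply, ite_mul, one_mul, zero_mul,
    Finset.sum_ite_eq', Finset.mem_univ, if_true]
  simp only [eq_comm (a := j), Fin.rev_eq_iff]

/-- Symmetry matching condition: if `H` is a real symmetric tridiagonal matrix with
nonzero off-diagonal entries, commuting with the mirror permutation `S`, and there exist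
`t₀` and `φ` such that every eigenvalue `μ` with a symmetric eigenvector satisfies
`e^{-i t₀ μ} = e^{iφ}` and every eigenvalue with an antisymmetric eigenvector satisfies
`e^{-i t₀ μ} = -e^{iφ}`, then perfect state transfer occurs:
`exp (-i t₀ H) e₁ = e^{iφ} e_N`. -/
theorem perfect_state_transfer_of_symmetry_matching
    (N : ℕ) (hN : 0 < N) (B J : ℕ → ℝ) (t₀ φ : ℝ)
    (hJ : ∀ i, i + 1 < N → J i ≠ 0)
    (hcomm : mirrorC N * triC N B J = triC N B J * mirrorC N)
    (hsym : ∀ (μ : ℂ) (v : Fin N → ℂ), v ≠ 0 → (triC N B J).mulVec v = μ • v →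
      (mirrorC N).mulVec v = v → Complex.exp (-(Complex.I * t₀) * μ) = Complex.exp (Complex.I * φ))
    (hasym : ∀ (μ : ℂ) (v : Fin N → ℂ), v ≠ 0 → (triC N B J).mulVec v = μ • v →
      (mirrorC N).mulVec v = -v →
      Complex.exp (-(Complex.I * t₀) * μ) = -Complex.exp (Complex.I * φ)) :
    (NormedSpace.exp ((-(Complex.I * t₀)) • triC N B J)).mulVec
        (Pi.single (⟨0, hN⟩ : Fin N) (1 : ℂ)) =
      Complex.exp (Complex.I * φ) •
        (Pi.single (⟨N - 1, by omega⟩ : Fin N) (1 : ℂ) : Fin N → ℂ) := by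
  have hH := isHermitian_triC N B J
  have hexp : NormedSpace.exp ((-(Complex.I * t₀)) • triC N B J) =
      Complex.exp (Complex.I * φ) • mirrorC N := by
    refine hH.ext_of_mulVec_eigenvectorBasis fun j => ?_
    have hv := hH.mulVec_eigenvectorBasis_eq_coe_smul j
    have hv0 : ⇑(hH.eigenvectorBasis j) ≠ 0 := fun h =>
      hH.eigenvectorBasis.orthonormal.ne_zero j (by ext i; exact congrFun h i)
    rw [exp_mulVec_of_mulVec_eq_smul (by rw [smul_mulVec, hv, smul_smul]),
      ← Complex.exp_eq_exp_ℂ, smul_mulVec]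
    rcases mulVec_eq_self_or_eq_neg_of_commute
      (fun _ _ _ => exists_eq_smul_of_triC_mulVec_eq_smul hJ) (mirrorC_mul_self N) hcomm hv0 hv
      with hS | hS
    · rw [hsym _ _ hv0 hv hS, hS]
    · rw [hasym _ _ hv0 hv hS, hS, neg_smul, smul_neg]
  rw [hexp, smul_mulVec, mirrorC_mulVec_single]
  rfl
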